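/- arXiv:1708.02115 — 2 statements merged into one kernel-verified Lean document; each statement's English description precedes it below -/
import Mathlib

section
/- Fix h > 0 and let ω_h(ξ,η) = ξ²·coth(hξ) − ξ/h − η²/ξ (defined for ξ ≠ 0). If ξ₁, ξ₂, ξ₃ are nonzero real numbers with ξ₁+ξ₂+ξ₃ = 0 and η₁, η₂, η₃ are real numbers with η₁+η₂+η₃ = 0, then ω_h(ξ₁,η₁) + ω_h(ξ₂,η₂) + ω_h(ξ₃,η₃) ≠ 0. In other words, the bilinear interactions of the finite-depth Camassa–Choi equation are non-resonant. -/
/-- Hyperbolic cotangent. -/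
noncomputable def coth (x : ℝ) : ℝ := Real.cosh x / Real.sinh x

/-- Dispersion relation of the finite-depth Camassa–Choi equation with depth `h`. -/
noncomputable def omegaH (h ξ η : ℝ) : ℝ := ξ ^ 2 * coth (h * ξ) - ξ / h - η ^ 2 / ξ

lemma coth_neg (x : ℝ) : coth (-x) = - coth x := by
  unfold coth
  rw [Real.sinh_neg, Real.cosh_neg, div_neg]

lemma omegaH_neg (h ξ η : ℝ) : omegaH h (-ξ) η = - omegaH h ξ η := by
  unfold omegaH
  rw [show h * -ξ = -(h * ξ) by ring, coth_neg]
  rw [div_neg, neg_div]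
  ring

/-- `x ↦ x * coth x` is strictly monotone on `(0, ∞)`. -/
lemma xcoth_strictMono : StrictMonoOn (fun x : ℝ => x * Real.cosh x / Real.sinh x) (Set.Ioi 0) := by
  apply strictMonoOn_of_deriv_pos (convex_Ioi 0)
  · exact ((continuous_id.mul Real.continuous_cosh).continuousOn).div
      Real.continuous_sinh.continuousOn
      (fun x hx => ne_of_gt (Real.sinh_pos_iff.2 hx))
  · intro x hx
    rw [interior_Ioi] at hx
    have hxpos : (0:ℝ) < x := hx
    have hs : Real.sinh x ≠ 0 := ne_of_gt (Real.sinh_pos_iff.2 hxpos)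
    have hd : HasDerivAt (fun x : ℝ => x * Real.cosh x / Real.sinh x)
        (((1 * Real.cosh x + x * Real.sinh x) * Real.sinh x
          - x * Real.cosh x * Real.cosh x) / (Real.sinh x)^2) x :=
      ((hasDerivAt_id x).mul (Real.hasDerivAt_cosh x)).div (Real.hasDerivAt_sinh x) hs
    rw [hd.deriv]
    apply div_pos
    · have h1 : x < Real.sinh x := Real.self_lt_sinh_iff.2 hxpos
      have h2 : 1 ≤ Real.cosh x := Real.one_le_cosh x
      have h3 : Real.cosh x ^ 2 = Real.sinh x ^ 2 + 1 := Real.cosh_sq x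
      nlinarith [Real.sinh_pos_iff.2 hxpos]
    · positivity

/-- `x ↦ x² coth x` is strictly superadditive on `(0, ∞)`. -/
lemma sq_coth_superadd {a b : ℝ} (ha : 0 < a) (hb : 0 < b) :
    a ^ 2 * coth a + b ^ 2 * coth b < (a + b) ^ 2 * coth (a + b) := by
  have hab : 0 < a + b := by linarith
  have h1 := xcoth_strictMono (Set.mem_Ioi.2 ha) (Set.mem_Ioi.2 hab) (by linarith)
  have h2 := xcoth_strictMono (Set.mem_Ioi.2 hb) (Set.mem_Ioi.2 hab) (by linarith)
  simp only at h1 h2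
  have e1 : a ^ 2 * coth a = a * (a * Real.cosh a / Real.sinh a) := by
    unfold coth; ring
  have e2 : b ^ 2 * coth b = b * (b * Real.cosh b / Real.sinh b) := by
    unfold coth; ring
  have e3 : (a + b) ^ 2 * coth (a + b)
      = a * ((a + b) * Real.cosh (a + b) / Real.sinh (a + b))
      + b * ((a + b) * Real.cosh (a + b) / Real.sinh (a + b)) := by
    unfold coth; ring
  rw [e1, e2, e3]
  have := mul_lt_mul_of_pos_left h1 ha
  have := mul_lt_mul_of_pos_left h2 hb
  linarith

/-- Key lemma: if the first two frequencies are positive, the resonance function is negative. -/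
lemma key (h : ℝ) (hh : 0 < h) (a b c p q r : ℝ) (ha : 0 < a) (hb : 0 < b)
    (hs : a + b + c = 0) (hr : p + q + r = 0) :
    omegaH h a p + omegaH h b q + omegaH h c r < 0 := by
  have hc : c = -(a + b) := by linarith
  have hab : 0 < a + b := by linarith
  -- superadditivity of the hyperbolic part
  have hsuper : a ^ 2 * coth (h * a) + b ^ 2 * coth (h * b)
      < (a + b) ^ 2 * coth (h * (a + b)) := by
    have hha : 0 < h * a := mul_pos hh ha
    have hhb : 0 < h * b := mul_pos hh hb
    have H := sq_coth_superadd hha hhb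
    rw [show h * a + h * b = h * (a + b) by ring] at H
    have h2p : (0:ℝ) < h ^ 2 := by positivity
    nlinarith [H]
  -- nonnegativity of the transverse part
  have hident : p ^ 2 / a + q ^ 2 / b - (p + q) ^ 2 / (a + b)
      = (p * b - q * a) ^ 2 / (a * b * (a + b)) := by
    field_simp
    ring
  have heta : 0 ≤ p ^ 2 / a + q ^ 2 / b - (p + q) ^ 2 / (a + b) := by
    rw [hident]; positivity
  have hr2 : r ^ 2 = (p + q) ^ 2 := by
    have : r = -(p + q) := by linarith
    rw [this]; ring
  rw [hc, omegaH_neg]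
  unfold omegaH
  rw [hr2]
  have hd : (a / h + b / h) = (a + b) / h := by ring
  linarith [hsuper, heta]

theorem finite_depth_nonresonance
    (h : ℝ) (hh : 0 < h)
    (ξ₁ ξ₂ ξ₃ η₁ η₂ η₃ : ℝ)
    (h1 : ξ₁ ≠ 0) (h2 : ξ₂ ≠ 0) (h3 : ξ₃ ≠ 0)
    (hξ : ξ₁ + ξ₂ + ξ₃ = 0) (hη : η₁ + η₂ + η₃ = 0) :
    omegaH h ξ₁ η₁ + omegaH h ξ₂ η₂ + omegaH h ξ₃ η₃ ≠ 0 := by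
  intro heq
  rcases h1.lt_or_gt with n1 | p1 <;> rcases h2.lt_or_gt with n2 | p2 <;>
    rcases h3.lt_or_gt with n3 | p3
  · linarith
  · -- (−,−,+)
    have k := key h hh (-ξ₁) (-ξ₂) (-ξ₃) η₁ η₂ η₃ (by linarith) (by linarith)
      (by linarith) hη
    rw [omegaH_neg, omegaH_neg, omegaH_neg] at k
    linarith
  · -- (−,+,−)
    have k := key h hh (-ξ₁) (-ξ₃) (-ξ₂) η₁ η₃ η₂ (by linarith) (by linarith)
      (by linarith) (by linarith)
    rw [omegaH_neg, omegaH_neg, omegaH_neg] at k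
    linarith
  · -- (−,+,+)
    have k := key h hh ξ₂ ξ₃ ξ₁ η₂ η₃ η₁ p2 p3 (by linarith) (by linarith)
    linarith
  · -- (+,−,−)
    have k := key h hh (-ξ₂) (-ξ₃) (-ξ₁) η₂ η₃ η₁ (by linarith) (by linarith)
      (by linarith) (by linarith)
    rw [omegaH_neg, omegaH_neg, omegaH_neg] at k
    linarith
  · -- (+,−,+)
    have k := key h hh ξ₁ ξ₃ ξ₂ η₁ η₃ η₂ p1 p3 (by linarith) (by linarith)
    linarith
  · -- (+,+,−)
    have k := key h hh ξ₁ ξ₂ ξ₃ η₁ η₂ η₃ p1 p2 hξ hη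
    linarith
  · linarith
end

section
/- Define k_sym(ξ₁,ξ₂) = (1/2)(ξ₁+ξ₂)⁴·csch²(ξ₁+ξ₂) − (1/2)(ξ₁+ξ₂)·ξ₁³·csch²(ξ₁) − (1/2)(ξ₁+ξ₂)·ξ₂³·csch²(ξ₂) with csch(x) = 1/sinh(x); let ω(ξ,η) = ξ²·coth(ξ) − ξ − η²/ξ, Ω(k₁,k₂) = ω(ξ₁,η₁) + ω(ξ₂,η₂) + ω(−ξ₁−ξ₂,−η₁−η₂), and ⟨ξ⟩ = √(1+ξ²). Then there exist C > 0 and ε ∈ (0,1) such that for all real ξ₁, ξ₂, η₁, η₂: (i) if 0 < |ξ₁| ≤ ε|ξ₂| then |k_sym(ξ₁,ξ₂)| ≤ C·(|ξ₂|/⟨ξ₂⟩)·|Ω(k₁,k₂)|; and (ii) if ξ₁ ≠ 0, ξ₂ ≠ 0, ξ₁+ξ₂ ≠ 0 and |ξ₁+ξ₂| ≤ ε|ξ₂|, then |k_sym(ξ₁,ξ₂)| ≤ C·(|ξ₁+ξ₂|/⟨ξ₂⟩)·|Ω(k₁,k₂)|. -/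
set_option maxHeartbeats 1600000

/-- Hyperbolic cosecant. -/
noncomputable def csch (x : ℝ) : ℝ := 1 / Real.sinh x

/-- Japanese bracket `⟨ξ⟩ = √(1+ξ²)`. -/
noncomputable def jb (ξ : ℝ) : ℝ := Real.sqrt (1 + ξ ^ 2)

/-- Dispersion relation of the depth-1 Camassa–Choi equation. -/
noncomputable def omega1 (ξ η : ℝ) : ℝ := ξ ^ 2 * coth ξ - ξ - η ^ 2 / ξ

/-- Resonance function restricted to the hyperplane `k₁ + k₂ + k₃ = 0`. -/
noncomputable def Omega1 (ξ₁ η₁ ξ₂ η₂ : ℝ) : ℝ :=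
  omega1 ξ₁ η₁ + omega1 ξ₂ η₂ + omega1 (-(ξ₁ + ξ₂)) (-(η₁ + η₂))

/-- Symmetrized commutator symbol of the normal form construction. -/
noncomputable def ksym (ξ₁ ξ₂ : ℝ) : ℝ :=
  (1 / 2) * (ξ₁ + ξ₂) ^ 4 * csch (ξ₁ + ξ₂) ^ 2
    - (1 / 2) * (ξ₁ + ξ₂) * ξ₁ ^ 3 * csch ξ₁ ^ 2
    - (1 / 2) * (ξ₁ + ξ₂) * ξ₂ ^ 3 * csch ξ₂ ^ 2

open Real Set

lemma mvtH {F F' : ℝ → ℝ} {a b : ℝ} (hab : a < b)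
    (hd : ∀ x ∈ Icc a b, HasDerivAt F (F' x) x) :
    ∃ c ∈ Ioo a b, F b - F a = (b - a) * F' c := by
  obtain ⟨c, hc, h⟩ := exists_hasDerivAt_eq_slope F F' hab
    (fun x hx => (hd x hx).continuousAt.continuousWithinAt)
    (fun x hx => hd x (Ioo_subset_Icc_self hx))
  refine ⟨c, hc, ?_⟩
  rw [h, mul_div_cancel₀ _ (sub_ne_zero.2 hab.ne')]

lemma monoH {F F' : ℝ → ℝ} {a b : ℝ} (hab : a ≤ b)
    (hd : ∀ x ∈ Icc a b, HasDerivAt F (F' x) x)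
    (hp : ∀ x ∈ Ioo a b, 0 ≤ F' x) : F a ≤ F b := by
  rcases eq_or_lt_of_le hab with rfl | h
  · exact le_refl _
  obtain ⟨c, hc, hce⟩ := mvtH h hd
  nlinarith [hp c hc]

-- B3
lemma sinh_le_xcosh {x : ℝ} (hx : 0 ≤ x) : Real.sinh x ≤ x * Real.cosh x := by
  have h := monoH (F := fun t => t * Real.cosh t - Real.sinh t)
      (F' := fun t => t * Real.sinh t) hx
    (fun t _ => by
      have h2 := ((hasDerivAt_id t).mul (Real.hasDerivAt_cosh t)).sub (Real.hasDerivAt_sinh t)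
      refine h2.congr_deriv ?_
      simp only [id_eq]; push_cast; ring)
    (fun t ht => by
      show (0:ℝ) ≤ t * Real.sinh t
      exact mul_nonneg ht.1.le (Real.sinh_nonneg_iff.2 ht.1.le))
  simp at h; linarith

-- B4
lemma xcosh_sub_sinh_le {x : ℝ} (hx : 0 ≤ x) :
    x * Real.cosh x - Real.sinh x ≤ x ^ 2 / 2 * Real.sinh x := by
  have h := monoH (F := fun t => t ^ 2 / 2 * Real.sinh t - t * Real.cosh t + Real.sinh t)
      (F' := fun t => t ^ 2 / 2 * Real.cosh t) hx
    (fun t _ => by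
      have h2 := ((((hasDerivAt_pow 2 t).div_const 2).mul (Real.hasDerivAt_sinh t)).sub
        ((hasDerivAt_id t).mul (Real.hasDerivAt_cosh t))).add (Real.hasDerivAt_sinh t)
      refine h2.congr_deriv ?_
      simp only [id_eq]; push_cast; ring)
    (fun t ht => by
      show (0:ℝ) ≤ t ^ 2 / 2 * Real.cosh t
      positivity)
  simp at h; linarith

-- B5
lemma one_add_half_sq_le_cosh {x : ℝ} (hx : 0 ≤ x) : 1 + x ^ 2 / 2 ≤ Real.cosh x := by
  have h := monoH (F := fun t => Real.cosh t - 1 - t ^ 2 / 2)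
      (F' := fun t => Real.sinh t - t) hx
    (fun t _ => by
      have h2 := ((Real.hasDerivAt_cosh t).sub_const 1).sub ((hasDerivAt_pow 2 t).div_const 2)
      refine h2.congr_deriv ?_
      push_cast; ring)
    (fun t ht => by
      show (0:ℝ) ≤ Real.sinh t - t
      linarith [(Real.self_le_sinh_iff (x := t)).2 ht.1.le])
  simp at h; linarith

-- B6
lemma cube_le_sinh {x : ℝ} (hx : 0 ≤ x) : x ^ 3 / 6 ≤ Real.sinh x := by
  have h := monoH (F := fun t => Real.sinh t - t ^ 3 / 6)
      (F' := fun t => Real.cosh t - t ^ 2 / 2) hx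
    (fun t _ => by
      have h2 := (Real.hasDerivAt_sinh t).sub ((hasDerivAt_pow 3 t).div_const 6)
      refine h2.congr_deriv ?_
      push_cast; ring)
    (fun t ht => by
      show (0:ℝ) ≤ Real.cosh t - t ^ 2 / 2
      nlinarith [one_add_half_sq_le_cosh ht.1.le])
  simp at h; linarith

-- B7
lemma B7 {x : ℝ} (hx : 0 ≤ x) :
    x ^ 4 ≤ 2 * x * Real.sinh x * Real.cosh x - x ^ 2 - Real.sinh x ^ 2 := by
  have h := monoH
      (F := fun t => 2 * t * Real.sinh t * Real.cosh t - t ^ 2 - Real.sinh t ^ 2 - t ^ 4)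
      (F' := fun t => 2 * t * (Real.cosh t ^ 2 + Real.sinh t ^ 2) - 2 * t - 4 * t ^ 3) hx
    (fun t _ => by
      have h2 := (((((hasDerivAt_id t).const_mul 2).mul (Real.hasDerivAt_sinh t)).mul
        (Real.hasDerivAt_cosh t)).sub (hasDerivAt_pow 2 t)).sub
        ((Real.hasDerivAt_sinh t).pow 2) |>.sub (hasDerivAt_pow 4 t)
      refine h2.congr_deriv ?_
      simp only [id_eq, Pi.mul_apply]; push_cast; ring)
    (fun t ht => by
      show (0:ℝ) ≤ 2 * t * (Real.cosh t ^ 2 + Real.sinh t ^ 2) - 2 * t - 4 * t ^ 3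
      have h3 : t ≤ Real.sinh t := (Real.self_le_sinh_iff (x := t)).2 ht.1.le
      nlinarith [Real.cosh_sq t, ht.1.le, mul_nonneg (mul_nonneg ht.1.le (sub_nonneg.2 h3)) (by linarith [Real.sinh_nonneg_iff.2 ht.1.le, ht.1.le] : (0:ℝ) ≤ Real.sinh t + t)])
  simp at h; linarith

-- sinh < cosh
lemma sinh_lt_cosh' (x : ℝ) : Real.sinh x < Real.cosh x := by
  have := Real.cosh_sub_sinh x
  nlinarith [Real.exp_pos (-x)]

lemma cosh_le_two_sinh {x : ℝ} (hx : 1 ≤ x) : Real.cosh x ≤ 2 * Real.sinh x := by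
  rw [Real.cosh_eq, Real.sinh_eq]
  have h1 : Real.exp 1 ≤ Real.exp x := Real.exp_le_exp.2 hx
  have h2 := Real.exp_one_gt_d9
  have h3 : Real.exp (-x) = (Real.exp x)⁻¹ := Real.exp_neg x
  have h4 := Real.exp_pos x
  rw [h3]
  rw [div_le_iff₀ (by norm_num), ← sub_nonneg]
  have h5 : (Real.exp x)⁻¹ ≤ 1 / 2.7 := by
    rw [inv_le_comm₀ (by positivity) (by norm_num)]
    nlinarith
  nlinarith

lemma cosh_five_le : Real.cosh 5 ≤ (75 : ℝ) := by
  rw [Real.cosh_eq]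
  have h1 : Real.exp 5 = Real.exp 1 ^ 5 := by
    rw [← Real.exp_nat_mul]; norm_num
  have h2 : Real.exp 1 ^ 5 ≤ 2.7182818286 ^ 5 :=
    pow_le_pow_left₀ (Real.exp_pos 1).le Real.exp_one_lt_d9.le 5
  have h3 : Real.exp (-5) ≤ 1 := Real.exp_le_one_iff.2 (by norm_num)
  nlinarith

-- derivative of p(t) = t^2 / sinh t ^ 2
lemma p_hasDeriv {t : ℝ} (ht : 0 < t) :
    HasDerivAt (fun u => u ^ 2 / Real.sinh u ^ 2)
      ((2 * t * Real.sinh t - 2 * t ^ 2 * Real.cosh t) / Real.sinh t ^ 3) t := by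
  have hS : Real.sinh t ≠ 0 := ne_of_gt (Real.sinh_pos_iff.2 ht)
  have h2 := (hasDerivAt_pow 2 t).div ((Real.hasDerivAt_sinh t).pow 2) (pow_ne_zero 2 hS)
  refine h2.congr_deriv ?_
  simp only [Pi.pow_apply]
  field_simp
  ring

lemma g_hasDeriv {t : ℝ} (ht : 0 < t) :
    HasDerivAt (fun u => u * Real.cosh u / Real.sinh u)
      (((1 * Real.cosh t + t * Real.sinh t) * Real.sinh t - t * Real.cosh t * Real.cosh t)
        / Real.sinh t ^ 2) t := by
  have hS : Real.sinh t ≠ 0 := ne_of_gt (Real.sinh_pos_iff.2 ht)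
  exact ((hasDerivAt_id t).mul (Real.hasDerivAt_cosh t)).div (Real.hasDerivAt_sinh t) hS

lemma f_hasDeriv {t : ℝ} (ht : 0 < t) :
    HasDerivAt (fun u => u ^ 2 * Real.cosh u / Real.sinh u)
      ((2 * t * Real.sinh t * Real.cosh t - t ^ 2) / Real.sinh t ^ 2) t := by
  have hS : Real.sinh t ≠ 0 := ne_of_gt (Real.sinh_pos_iff.2 ht)
  have h2 := ((hasDerivAt_pow 2 t).mul (Real.hasDerivAt_cosh t)).div
    (Real.hasDerivAt_sinh t) hS
  refine h2.congr_deriv ?_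
  have hC := Real.cosh_sq t
  simp only [Pi.mul_apply]
  field_simp
  have hC2 : Real.cosh t ^ 2 * t ^ 2 = (Real.sinh t ^ 2 + 1) * t ^ 2 := by rw [hC]
  push_cast
  nlinarith [hC, sq_nonneg (Real.sinh t), hC2]

-- monotonicity of g
lemma g_mono {x y : ℝ} (hx : 0 < x) (hxy : x ≤ y) :
    x * Real.cosh x / Real.sinh x ≤ y * Real.cosh y / Real.sinh y := by
  refine monoH hxy (fun t htt => g_hasDeriv (lt_of_lt_of_le hx htt.1)) (fun t htt => ?_)
  have ht : 0 < t := lt_trans hx htt.1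
  have hS : 0 < Real.sinh t := Real.sinh_pos_iff.2 ht
  have h1 : t ≤ Real.sinh t := Real.self_le_sinh_iff.2 ht.le
  have h2 : 1 ≤ Real.cosh t := Real.one_le_cosh t
  have hC := Real.cosh_sq t
  have key : 0 ≤ Real.cosh t * Real.sinh t - t := by nlinarith
  have : (1 * Real.cosh t + t * Real.sinh t) * Real.sinh t - t * Real.cosh t * Real.cosh t
      = Real.cosh t * Real.sinh t - t := by nlinarith [hC]
  rw [this]
  positivity

lemma superadd {x y : ℝ} (hx : 0 < x) (hy : 0 < y) :
    x ^ 2 * Real.cosh x / Real.sinh x + y ^ 2 * Real.cosh y / Real.sinh y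
      ≤ (x + y) ^ 2 * Real.cosh (x + y) / Real.sinh (x + y) := by
  have g1 := g_mono hx (le_add_of_nonneg_right hy.le)
  have g2 := g_mono hy (le_add_of_nonneg_left hx.le)
  have h1 : x * (x * Real.cosh x / Real.sinh x)
      ≤ x * ((x + y) * Real.cosh (x + y) / Real.sinh (x + y)) :=
    mul_le_mul_of_nonneg_left g1 hx.le
  have h2 : y * (y * Real.cosh y / Real.sinh y)
      ≤ y * ((x + y) * Real.cosh (x + y) / Real.sinh (x + y)) :=
    mul_le_mul_of_nonneg_left g2 hy.le
  have e1 : x ^ 2 * Real.cosh x / Real.sinh x = x * (x * Real.cosh x / Real.sinh x) := by ring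
  have e2 : y ^ 2 * Real.cosh y / Real.sinh y = y * (y * Real.cosh y / Real.sinh y) := by ring
  have e3 : (x + y) ^ 2 * Real.cosh (x + y) / Real.sinh (x + y)
      = x * ((x + y) * Real.cosh (x + y) / Real.sinh (x + y))
        + y * ((x + y) * Real.cosh (x + y) / Real.sinh (x + y)) := by ring
  linarith

lemma p_anti {x y : ℝ} (hx : 0 < x) (hxy : x ≤ y) :
    y ^ 2 / Real.sinh y ^ 2 ≤ x ^ 2 / Real.sinh x ^ 2 := by
  have h := monoH (F := fun u => -(u ^ 2 / Real.sinh u ^ 2))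
      (F' := fun u => -((2 * u * Real.sinh u - 2 * u ^ 2 * Real.cosh u) / Real.sinh u ^ 3)) hxy
    (fun t htt => (p_hasDeriv (lt_of_lt_of_le hx htt.1)).neg)
    (fun t htt => by
      have ht : 0 < t := lt_trans hx htt.1
      have hS : 0 < Real.sinh t := Real.sinh_pos_iff.2 ht
      show (0:ℝ) ≤ -((2 * t * Real.sinh t - 2 * t ^ 2 * Real.cosh t) / Real.sinh t ^ 3)
      rw [neg_div', neg_sub]
      apply div_nonneg _ (by positivity)
      nlinarith [sinh_le_xcosh ht.le])
  simpa using h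

lemma p_slope {x y : ℝ} (hx : 0 < x) (hxy : x ≤ y) :
    x ^ 2 / Real.sinh x ^ 2 - y ^ 2 / Real.sinh y ^ 2 ≤ (y ^ 2 - x ^ 2) / 2 := by
  have h := monoH (F := fun u => u ^ 2 / 2 + u ^ 2 / Real.sinh u ^ 2)
      (F' := fun u => u + (2 * u * Real.sinh u - 2 * u ^ 2 * Real.cosh u) / Real.sinh u ^ 3) hxy
    (fun t htt => by
      have ht : 0 < t := lt_of_lt_of_le hx htt.1
      have h2 := ((hasDerivAt_pow 2 t).div_const 2).add (p_hasDeriv ht)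
      refine h2.congr_deriv ?_
      push_cast; ring)
    (fun t htt => by
      have ht : 0 < t := lt_trans hx htt.1
      have hS : 0 < Real.sinh t := Real.sinh_pos_iff.2 ht
      have hts : t ≤ Real.sinh t := Real.self_le_sinh_iff.2 ht.le
      show (0:ℝ) ≤ t + (2 * t * Real.sinh t - 2 * t ^ 2 * Real.cosh t) / Real.sinh t ^ 3
      have e : t + (2 * t * Real.sinh t - 2 * t ^ 2 * Real.cosh t) / Real.sinh t ^ 3
          = (t * Real.sinh t ^ 3 + 2 * t * Real.sinh t - 2 * t ^ 2 * Real.cosh t)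
            / Real.sinh t ^ 3 := by
        field_simp; ring
      rw [e]
      apply div_nonneg _ (by positivity)
      have hb4 := xcosh_sub_sinh_le ht.le
      -- t*(S^3 + 2S - 2tC) ≥ 0 :  2tC ≤ 2S + t^2 S ≤ 2S + S^3
      have h1 : t * Real.cosh t ≤ Real.sinh t + t ^ 2 / 2 * Real.sinh t := by linarith
      have ht2 : t ^ 2 ≤ Real.sinh t ^ 2 := by nlinarith [hts, ht.le]
      have h2 : t ^ 2 * Real.sinh t ≤ Real.sinh t ^ 3 := by nlinarith [ht2, hS.le]
      nlinarith [ht.le])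
  linarith [h]

-- the small-frequency core: β ≤ 4
lemma core_small {δ β : ℝ} (hδ : 0 < δ) (hr : δ ≤ β / 100) (hβ4 : β ≤ 4) :
    |(β + δ) ^ 3 / Real.sinh (β + δ) ^ 2 - β ^ 3 / Real.sinh β ^ 2 - δ ^ 3 / Real.sinh δ ^ 2|
        * Real.sqrt (1 + β ^ 2)
      ≤ 125000 * ((β + δ) ^ 2 * Real.cosh (β + δ) / Real.sinh (β + δ)
          - β ^ 2 * Real.cosh β / Real.sinh β - δ ^ 2 * Real.cosh δ / Real.sinh δ) := by
  have hβ : 0 < β := by linarith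
  have hs : 0 < β + δ := by linarith
  have hSβ : 0 < Real.sinh β := Real.sinh_pos_iff.2 hβ
  have hSδ : 0 < Real.sinh δ := Real.sinh_pos_iff.2 hδ
  have hSs : 0 < Real.sinh (β + δ) := Real.sinh_pos_iff.2 hs
  -- upper bound for |X|
  set Ps := (β + δ) ^ 2 / Real.sinh (β + δ) ^ 2 with hPs
  set Pβ := β ^ 2 / Real.sinh β ^ 2 with hPβ
  set Pδ := δ ^ 2 / Real.sinh δ ^ 2 with hPδ
  have hXeq : (β + δ) ^ 3 / Real.sinh (β + δ) ^ 2 - β ^ 3 / Real.sinh β ^ 2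
      - δ ^ 3 / Real.sinh δ ^ 2 = δ * (Ps - Pδ) + β * (Ps - Pβ) := by
    rw [hPs, hPβ, hPδ]; field_simp; ring
  have ha1 : Ps ≤ Pδ := p_anti hδ (by linarith)
  have ha2 : Ps ≤ Pβ := p_anti hβ (by linarith)
  have hXabs : |(β + δ) ^ 3 / Real.sinh (β + δ) ^ 2 - β ^ 3 / Real.sinh β ^ 2
      - δ ^ 3 / Real.sinh δ ^ 2| = δ * (Pδ - Ps) + β * (Pβ - Ps) := by
    rw [hXeq, abs_of_nonpos (by nlinarith)]; ring
  have hs1 : Pδ - Ps ≤ ((β + δ) ^ 2 - δ ^ 2) / 2 := p_slope hδ (by linarith)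
  have hs2 : Pβ - Ps ≤ ((β + δ) ^ 2 - β ^ 2) / 2 := p_slope hβ (by linarith)
  have hX : |(β + δ) ^ 3 / Real.sinh (β + δ) ^ 2 - β ^ 3 / Real.sinh β ^ 2
      - δ ^ 3 / Real.sinh δ ^ 2| ≤ 2 * δ * β ^ 2 := by
    rw [hXabs]; nlinarith
  -- sqrt bound
  have hsq : Real.sqrt (1 + β ^ 2) ≤ 5 := by
    nlinarith [Real.sq_sqrt (show (0:ℝ) ≤ 1 + β ^ 2 by positivity),
      Real.sqrt_nonneg (1 + β ^ 2)]
  -- lower bound for P via MVT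
  obtain ⟨ζ, hζ, hζe⟩ := mvtH (F := fun u => u ^ 2 * Real.cosh u / Real.sinh u)
    (F' := fun t => (2 * t * Real.sinh t * Real.cosh t - t ^ 2) / Real.sinh t ^ 2)
    (show β < β + δ by linarith)
    (fun t htt => f_hasDeriv (lt_of_lt_of_le hβ htt.1))
  have hζ0 : 0 < ζ := lt_trans hβ hζ.1
  have hζ5 : ζ ≤ 5 := by linarith [hζ.2]
  have hSζ : 0 < Real.sinh ζ := Real.sinh_pos_iff.2 hζ0
  have hCζ : 0 < Real.cosh ζ := Real.cosh_pos ζ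
  -- f'(ζ) ≥ 1 + β^2/5625
  have hfd : 1 + β ^ 2 / 5625 ≤ (2 * ζ * Real.sinh ζ * Real.cosh ζ - ζ ^ 2) / Real.sinh ζ ^ 2 := by
    have h7 := B7 hζ0.le
    have hcm : Real.cosh ζ ≤ 75 := by
      calc Real.cosh ζ ≤ Real.cosh 5 := Real.cosh_le_cosh.2 (by
            rw [abs_of_pos hζ0, abs_of_pos (show (0:ℝ) < 5 by norm_num)]; exact hζ5)
        _ ≤ 75 := cosh_five_le
    have hsc : Real.sinh ζ ≤ ζ * Real.cosh ζ := sinh_le_xcosh hζ0.le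
    -- sinh ζ^2 ≤ ζ^2 * 75^2  and numerator ≥ ζ^4 ≥ β^2 ζ^2
    have h1a : Real.sinh ζ * Real.sinh ζ ≤ (ζ * Real.cosh ζ) * (ζ * Real.cosh ζ) :=
      mul_le_mul hsc hsc hSζ.le (by positivity)
    have h1b : Real.cosh ζ * Real.cosh ζ ≤ 75 * 75 :=
      mul_le_mul hcm hcm (Real.cosh_pos ζ).le (by norm_num)
    have h1 : Real.sinh ζ ^ 2 ≤ ζ ^ 2 * 5625 := by nlinarith [sq_nonneg ζ, hζ0.le]
    have h2a : β ^ 2 ≤ ζ ^ 2 := by nlinarith [hζ.1, hβ]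
    have h2 : β ^ 2 * ζ ^ 2 ≤ ζ ^ 4 := by nlinarith [h2a, sq_nonneg ζ]
    rw [le_div_iff₀ (by positivity)]
    nlinarith [hSζ]
  -- f(δ) ≤ δ (1 + δ^2/2)
  have hfδ : δ ^ 2 * Real.cosh δ / Real.sinh δ ≤ δ * (1 + δ ^ 2 / 2) := by
    rw [div_le_iff₀ hSδ]
    nlinarith [xcosh_sub_sinh_le hδ.le, hδ]
  have hP : δ * (β ^ 2 / 8000)
      ≤ (β + δ) ^ 2 * Real.cosh (β + δ) / Real.sinh (β + δ)
        - β ^ 2 * Real.cosh β / Real.sinh β - δ ^ 2 * Real.cosh δ / Real.sinh δ := by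
    have : (β + δ) ^ 2 * Real.cosh (β + δ) / Real.sinh (β + δ)
        - β ^ 2 * Real.cosh β / Real.sinh β = δ * ((2 * ζ * Real.sinh ζ * Real.cosh ζ - ζ ^ 2)
          / Real.sinh ζ ^ 2) := by
      have := hζe
      linarith [this]
    rw [this]
    have hd2 : δ ^ 2 / 2 ≤ β ^ 2 / 20000 := by nlinarith
    have h3 : δ * (1 + β ^ 2 / 5625) ≤ δ * ((2 * ζ * Real.sinh ζ * Real.cosh ζ - ζ ^ 2)
        / Real.sinh ζ ^ 2) := mul_le_mul_of_nonneg_left hfd hδ.le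
    have h4 : δ * (δ ^ 2 / 2) ≤ δ * (β ^ 2 / 20000) := mul_le_mul_of_nonneg_left hd2 hδ.le
    linarith [hfδ, mul_nonneg hδ.le (sq_nonneg β)]
  -- combine
  have hXa : |(β + δ) ^ 3 / Real.sinh (β + δ) ^ 2 - β ^ 3 / Real.sinh β ^ 2
      - δ ^ 3 / Real.sinh δ ^ 2| * Real.sqrt (1 + β ^ 2) ≤ 2 * δ * β ^ 2 * 5 :=
    mul_le_mul hX hsq (Real.sqrt_nonneg _) (by positivity)
  have hclose : 2 * δ * β ^ 2 * 5 ≤ 125000 * (δ * (β ^ 2 / 8000)) := by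
    linarith only [mul_nonneg hδ.le (sq_nonneg β)]
  have h125 := mul_le_mul_of_nonneg_left hP (by norm_num : (0:ℝ) ≤ 125000)
  linarith only [hXa, hclose, h125, mul_nonneg hδ.le (sq_nonneg β)]

lemma core_large {δ β : ℝ} (hδ : 0 < δ) (hr : δ ≤ β / 100) (hβ4 : (4:ℝ) ≤ β) :
    |(β + δ) ^ 3 / Real.sinh (β + δ) ^ 2 - β ^ 3 / Real.sinh β ^ 2 - δ ^ 3 / Real.sinh δ ^ 2|
        * Real.sqrt (1 + β ^ 2)
      ≤ 125000 * ((β + δ) ^ 2 * Real.cosh (β + δ) / Real.sinh (β + δ)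
          - β ^ 2 * Real.cosh β / Real.sinh β - δ ^ 2 * Real.cosh δ / Real.sinh δ) := by
  have hβ : 0 < β := by linarith
  have hs : 0 < β + δ := by linarith
  have hSβ : 0 < Real.sinh β := Real.sinh_pos_iff.2 hβ
  have hSδ : 0 < Real.sinh δ := Real.sinh_pos_iff.2 hδ
  have hSs : 0 < Real.sinh (β + δ) := Real.sinh_pos_iff.2 hs
  set Ps := (β + δ) ^ 2 / Real.sinh (β + δ) ^ 2 with hPsd
  set Pβ := β ^ 2 / Real.sinh β ^ 2 with hPβd
  set Pδ := δ ^ 2 / Real.sinh δ ^ 2 with hPδd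
  have hXeq : (β + δ) ^ 3 / Real.sinh (β + δ) ^ 2 - β ^ 3 / Real.sinh β ^ 2
      - δ ^ 3 / Real.sinh δ ^ 2 = δ * (Ps - Pδ) + β * (Ps - Pβ) := by
    rw [hPsd, hPβd, hPδd]; field_simp; ring
  have ha1 : Ps ≤ Pδ := p_anti hδ (by linarith)
  have ha2 : Ps ≤ Pβ := p_anti hβ (by linarith)
  have hXabs : |(β + δ) ^ 3 / Real.sinh (β + δ) ^ 2 - β ^ 3 / Real.sinh β ^ 2
      - δ ^ 3 / Real.sinh δ ^ 2| = δ * (Pδ - Ps) + β * (Pβ - Ps) := by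
    rw [hXeq, abs_of_nonpos (by nlinarith)]; ring
  have hPδ1 : Pδ ≤ 1 := by
    rw [hPδd, div_le_one (by positivity)]
    have := Real.self_le_sinh_iff.2 hδ.le
    nlinarith
  have hPs0 : 0 ≤ Ps := by rw [hPsd]; positivity
  -- term 2
  have hid : Real.sinh (β + δ) ^ 2 - Real.sinh β ^ 2
      = Real.sinh δ * Real.sinh ((β + δ) + β) := by
    have e : Real.sinh δ = Real.sinh ((β + δ) - β) := by norm_num
    rw [e, Real.sinh_add (β + δ) β, Real.sinh_sub]
    nlinarith [Real.cosh_sq (β + δ), Real.cosh_sq β]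
  have h5 : Real.sinh ((β + δ) + β) ≤ 4 * Real.sinh (β + δ) * Real.sinh β := by
    rw [Real.sinh_add]
    have c1 : Real.cosh β ≤ 2 * Real.sinh β := cosh_le_two_sinh (by linarith)
    have c2 : Real.cosh (β + δ) ≤ 2 * Real.sinh (β + δ) := cosh_le_two_sinh (by linarith)
    nlinarith [hSβ, hSs]
  have h6 : Real.sinh δ ≤ 2 * δ * Real.sinh β := by
    have h61 := sinh_le_xcosh hδ.le
    have hc : Real.cosh δ ≤ Real.cosh β := Real.cosh_le_cosh.2 (by
      rw [abs_of_pos hδ, abs_of_pos hβ]; linarith)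
    have cb : Real.cosh β ≤ 2 * Real.sinh β := cosh_le_two_sinh (by linarith)
    nlinarith [hδ.le]
  have h7 : β ^ 3 ≤ 6 * Real.sinh β := by linarith [cube_le_sinh hβ.le]
  have hSsβ : Real.sinh β ≤ Real.sinh (β + δ) := Real.sinh_le_sinh.2 (by linarith)
  have key : β ^ 3 * (Real.sinh (β + δ) ^ 2 - Real.sinh β ^ 2)
      ≤ 48 * δ * (Real.sinh β ^ 2 * Real.sinh (β + δ) ^ 2) := by
    rw [hid]
    have k1 : Real.sinh δ * Real.sinh ((β + δ) + β)
        ≤ (2 * δ * Real.sinh β) * (4 * Real.sinh (β + δ) * Real.sinh β) :=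
      mul_le_mul h6 h5 (Real.sinh_nonneg_iff.2 (by linarith)) (by positivity)
    have k2 : β ^ 3 * (Real.sinh δ * Real.sinh ((β + δ) + β))
        ≤ β ^ 3 * ((2 * δ * Real.sinh β) * (4 * Real.sinh (β + δ) * Real.sinh β)) :=
      mul_le_mul_of_nonneg_left k1 (by positivity)
    have k3 : β ^ 3 * ((2 * δ * Real.sinh β) * (4 * Real.sinh (β + δ) * Real.sinh β))
        ≤ (6 * Real.sinh (β + δ)) * ((2 * δ * Real.sinh β)
          * (4 * Real.sinh (β + δ) * Real.sinh β)) := by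
      apply mul_le_mul_of_nonneg_right _ (by positivity)
      calc β ^ 3 ≤ 6 * Real.sinh β := h7
        _ ≤ 6 * Real.sinh (β + δ) := by linarith
    have k4 : (6 * Real.sinh (β + δ)) * ((2 * δ * Real.sinh β)
        * (4 * Real.sinh (β + δ) * Real.sinh β))
        = 48 * δ * (Real.sinh β ^ 2 * Real.sinh (β + δ) ^ 2) := by ring
    linarith only [k2, k3, k4.le, k4.ge]
  have hT2 : β * (Pβ - Ps) ≤ 48 * δ := by
    have step1 : Pβ - Ps ≤ β ^ 2 / Real.sinh β ^ 2 - β ^ 2 / Real.sinh (β + δ) ^ 2 := by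
      rw [hPβd, hPsd]
      have h8 : β ^ 2 / Real.sinh (β + δ) ^ 2 ≤ (β + δ) ^ 2 / Real.sinh (β + δ) ^ 2 := by
        gcongr
        nlinarith
      linarith only [h8]
    have e : β * (β ^ 2 / Real.sinh β ^ 2 - β ^ 2 / Real.sinh (β + δ) ^ 2)
        = (β ^ 3 * (Real.sinh (β + δ) ^ 2 - Real.sinh β ^ 2))
          / (Real.sinh β ^ 2 * Real.sinh (β + δ) ^ 2) := by
      field_simp
    have step2 : β * (β ^ 2 / Real.sinh β ^ 2 - β ^ 2 / Real.sinh (β + δ) ^ 2) ≤ 48 * δ := by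
      rw [e, div_le_iff₀ (by positivity)]
      linarith only [key]
    have step3 := mul_le_mul_of_nonneg_left step1 hβ.le
    linarith only [step2, step3]
  have hX : |(β + δ) ^ 3 / Real.sinh (β + δ) ^ 2 - β ^ 3 / Real.sinh β ^ 2
      - δ ^ 3 / Real.sinh δ ^ 2| ≤ 49 * δ := by
    rw [hXabs]
    have t1 : δ * (Pδ - Ps) ≤ δ * 1 :=
      mul_le_mul_of_nonneg_left (by linarith only [hPδ1, hPs0]) hδ.le
    linarith only [t1, hT2, hδ]
  have hsq2 : Real.sqrt (1 + β ^ 2) ≤ 2 * β := by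
    nlinarith [Real.sq_sqrt (show (0:ℝ) ≤ 1 + β ^ 2 by positivity),
      Real.sqrt_nonneg (1 + β ^ 2)]
  have hXa : |(β + δ) ^ 3 / Real.sinh (β + δ) ^ 2 - β ^ 3 / Real.sinh β ^ 2
      - δ ^ 3 / Real.sinh δ ^ 2| * Real.sqrt (1 + β ^ 2) ≤ 49 * δ * (2 * β) :=
    mul_le_mul hX hsq2 (Real.sqrt_nonneg _) (by positivity)
  -- lower bound for P
  have m1 : δ * (β * Real.cosh β / Real.sinh β)
      ≤ (β + δ) ^ 2 * Real.cosh (β + δ) / Real.sinh (β + δ)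
        - β ^ 2 * Real.cosh β / Real.sinh β := by
    have e1 : (β + δ) ^ 2 * Real.cosh (β + δ) / Real.sinh (β + δ)
        = (β + δ) * ((β + δ) * Real.cosh (β + δ) / Real.sinh (β + δ)) := by ring
    have e2 : β ^ 2 * Real.cosh β / Real.sinh β
        = β * (β * Real.cosh β / Real.sinh β) := by ring
    have g1 := g_mono hβ (show β ≤ β + δ by linarith)
    have g2 : (β + δ) * (β * Real.cosh β / Real.sinh β)
        ≤ (β + δ) * ((β + δ) * Real.cosh (β + δ) / Real.sinh (β + δ)) :=
      mul_le_mul_of_nonneg_left g1 hs.le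
    rw [e1, e2]
    nlinarith [g2]
  have m2 : δ ^ 2 * Real.cosh δ / Real.sinh δ ≤ δ * (1 + δ) := by
    rw [div_le_iff₀ hSδ]
    have hcs := Real.cosh_sub_sinh δ
    have he1 : Real.exp (-δ) ≤ 1 := Real.exp_le_one_iff.2 (by linarith)
    have hds : δ ≤ Real.sinh δ := Real.self_le_sinh_iff.2 hδ.le
    nlinarith [hδ.le, hSδ.le]
  have m3 : β ≤ β * Real.cosh β / Real.sinh β := by
    rw [le_div_iff₀ hSβ]
    nlinarith [sinh_lt_cosh' β, hβ]
  have hP : δ * (β / 2)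
      ≤ (β + δ) ^ 2 * Real.cosh (β + δ) / Real.sinh (β + δ)
        - β ^ 2 * Real.cosh β / Real.sinh β - δ ^ 2 * Real.cosh δ / Real.sinh δ := by
    have m4 : δ * β ≤ δ * (β * Real.cosh β / Real.sinh β) :=
      mul_le_mul_of_nonneg_left m3 hδ.le
    have m5 : δ * (1 + δ) ≤ δ * (1 + β / 100) :=
      mul_le_mul_of_nonneg_left (by linarith) hδ.le
    have m6 : δ * (1 + β / 100) + δ * (β / 2) ≤ δ * β := by
      have : (1 : ℝ) + β / 100 + β / 2 ≤ β := by linarith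
      nlinarith [hδ.le]
    linarith only [m1, m2, m4, m5, m6]
  have h125 := mul_le_mul_of_nonneg_left hP (by norm_num : (0:ℝ) ≤ 125000)
  have hclose : 49 * δ * (2 * β) ≤ 125000 * (δ * (β / 2)) := by
    linarith only [mul_nonneg hδ.le hβ.le]
  linarith only [hXa, hclose, h125]

noncomputable def fE (x : ℝ) : ℝ := x ^ 2 * Real.cosh x / Real.sinh x
noncomputable def hE (x : ℝ) : ℝ := x ^ 3 / Real.sinh x ^ 2

lemma coreC {δ β : ℝ} (hδ : 0 < δ) (hr : δ ≤ β / 100) :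
    |hE (β + δ) - hE β - hE δ| * Real.sqrt (1 + β ^ 2)
      ≤ 125000 * (fE (β + δ) - fE β - fE δ) := by
  unfold hE fE
  rcases le_total β 4 with h | h
  · exact core_small hδ hr h
  · exact core_large hδ hr h

lemma fE_neg (x : ℝ) : fE (-x) = -fE x := by
  unfold fE; rw [Real.sinh_neg, Real.cosh_neg, div_neg]; ring

lemma hE_neg (x : ℝ) : hE (-x) = -hE x := by
  unfold hE; rw [Real.sinh_neg]
  rw [show Real.sinh x ^ 2 = Real.sinh x ^ 2 from rfl]
  rw [show (-Real.sinh x) ^ 2 = Real.sinh x ^ 2 by ring, show (-x) ^ 3 = -x ^ 3 by ring]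
  ring

lemma ksym_eq (ξ₁ ξ₂ : ℝ) :
    ksym ξ₁ ξ₂ = 1 / 2 * (ξ₁ + ξ₂) * (hE (ξ₁ + ξ₂) - hE ξ₁ - hE ξ₂) := by
  unfold ksym csch hE; ring

lemma omega1_neg (ξ η : ℝ) : omega1 (-ξ) (-η) = -omega1 ξ η := by
  unfold omega1 coth
  rw [Real.sinh_neg, Real.cosh_neg, div_neg, div_neg]
  ring

lemma Omega1_eq (ξ₁ η₁ ξ₂ η₂ : ℝ) (h1 : ξ₁ ≠ 0) (h2 : ξ₂ ≠ 0) (hs : ξ₁ + ξ₂ ≠ 0) :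
    Omega1 ξ₁ η₁ ξ₂ η₂ = (fE ξ₁ + fE ξ₂ - fE (ξ₁ + ξ₂))
      - (ξ₂ * η₁ - ξ₁ * η₂) ^ 2 / (ξ₁ * ξ₂ * (ξ₁ + ξ₂)) := by
  unfold Omega1
  rw [omega1_neg (ξ₁ + ξ₂) (η₁ + η₂)]
  unfold omega1 coth fE
  have hS1 : Real.sinh ξ₁ ≠ 0 := Real.sinh_ne_zero.2 h1
  have hS2 : Real.sinh ξ₂ ≠ 0 := Real.sinh_ne_zero.2 h2
  have hSs : Real.sinh (ξ₁ + ξ₂) ≠ 0 := Real.sinh_ne_zero.2 hs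
  field_simp
  ring

lemma jb_pos (x : ℝ) : 0 < jb x := by
  unfold jb; positivity

lemma jb_le {β ξ₂ : ℝ} (h : 1 + ξ₂ ^ 2 ≤ 4 * (1 + β ^ 2)) :
    jb ξ₂ ≤ 2 * Real.sqrt (1 + β ^ 2) := by
  unfold jb
  have h2 : 4 * (1 + β ^ 2) = (2 * Real.sqrt (1 + β ^ 2)) ^ 2 := by
    rw [mul_pow, Real.sq_sqrt (by positivity)]; ring
  calc Real.sqrt (1 + ξ₂ ^ 2) ≤ Real.sqrt ((2 * Real.sqrt (1 + β ^ 2)) ^ 2) :=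
        Real.sqrt_le_sqrt (by rw [← h2]; exact h)
    _ = 2 * Real.sqrt (1 + β ^ 2) := Real.sqrt_sq (by positivity)

lemma finish {δ β : ℝ} (hδ : 0 < δ) (hr : δ ≤ β / 100) {K Om ξ₂ s : ℝ}
    (hK : |K| = |hE (β + δ) - hE β - hE δ|)
    (hOm : fE (β + δ) - fE β - fE δ ≤ |Om|)
    (hjb : jb ξ₂ ≤ 2 * Real.sqrt (1 + β ^ 2)) :
    |s| * |K| ≤ 250000 * (|s| / jb ξ₂) * |Om| := by
  have hβ : 0 < β := by linarith
  have hjb0 : 0 < jb ξ₂ := jb_pos ξ₂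
  have hP0 : 0 ≤ fE (β + δ) - fE β - fE δ := by
    have := superadd hβ hδ
    unfold fE; linarith [this]
  have hcore := coreC hδ hr
  rw [← hK] at hcore
  -- |K| * jb ≤ 250000 * |Om|
  have s1 : |K| * jb ξ₂ ≤ |K| * (2 * Real.sqrt (1 + β ^ 2)) :=
    mul_le_mul_of_nonneg_left hjb (abs_nonneg K)
  have s2 : |K| * (2 * Real.sqrt (1 + β ^ 2)) ≤ 2 * (125000 * (fE (β + δ) - fE β - fE δ)) := by
    nlinarith [hcore]
  have s3 : |K| * jb ξ₂ ≤ 250000 * |Om| := by nlinarith [hP0]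
  have s4 : |s| * (|K| * jb ξ₂) ≤ |s| * (250000 * |Om|) :=
    mul_le_mul_of_nonneg_left s3 (abs_nonneg s)
  rw [show 250000 * (|s| / jb ξ₂) * |Om| = (|s| * (250000 * |Om|)) / jb ξ₂ by ring,
    le_div_iff₀ hjb0]
  linarith [s4]

lemma fin_i {δ β : ℝ} (hδ : 0 < δ) (hr : δ ≤ β / 100) {K Om ξ₂ s : ℝ}
    (hK : |K| = |hE (β + δ) - hE β - hE δ|)
    (hOm : fE (β + δ) - fE β - fE δ ≤ |Om|)
    (hjb : jb ξ₂ ≤ 2 * Real.sqrt (1 + β ^ 2))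
    (hs2 : |s| ≤ 2 * |ξ₂|) :
    1 / 2 * (|s| * |K|) ≤ 1000000 * (|ξ₂| / jb ξ₂) * |Om| := by
  have h := finish hδ hr hK hOm hjb (s := s)
  have hjb0 : 0 < jb ξ₂ := jb_pos ξ₂
  have h2 : 250000 * (|s| / jb ξ₂) * |Om| ≤ 250000 * (2 * |ξ₂| / jb ξ₂) * |Om| := by
    gcongr
  have h3 : 250000 * (2 * |ξ₂| / jb ξ₂) * |Om| ≤ 2 * (1000000 * (|ξ₂| / jb ξ₂) * |Om|) := by
    rw [show 250000 * (2 * |ξ₂| / jb ξ₂) * |Om| = 500000 * (|ξ₂| / jb ξ₂) * |Om| by ring]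
    have : (0:ℝ) ≤ (|ξ₂| / jb ξ₂) * |Om| := by positivity
    nlinarith [this]
  linarith


lemma superaddE {x y : ℝ} (hx : 0 < x) (hy : 0 < y) : fE x + fE y ≤ fE (x + y) := by
  unfold fE; exact superadd hx hy

lemma fin_ii {δ β : ℝ} (hδ : 0 < δ) (hr : δ ≤ β / 100) {K Om ξ₂ s : ℝ}
    (hK : |K| = |hE (β + δ) - hE β - hE δ|)
    (hOm : fE (β + δ) - fE β - fE δ ≤ |Om|)
    (hjb : jb ξ₂ ≤ 2 * Real.sqrt (1 + β ^ 2)) :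
    1 / 2 * (|s| * |K|) ≤ 1000000 * (|s| / jb ξ₂) * |Om| := by
  have h := finish hδ hr hK hOm hjb (s := s)
  have h0 : 0 ≤ |s| / jb ξ₂ * |Om| :=
    mul_nonneg (div_nonneg (abs_nonneg s) (jb_pos ξ₂).le) (abs_nonneg Om)
  nlinarith [h, h0]

lemma abs_ksym (ξ₁ ξ₂ : ℝ) :
    |ksym ξ₁ ξ₂| = 1 / 2 * (|ξ₁ + ξ₂| * |hE (ξ₁ + ξ₂) - hE ξ₁ - hE ξ₂|) := by
  rw [ksym_eq, abs_mul, abs_mul, abs_of_nonneg (by norm_num : (0:ℝ) ≤ 1/2)]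
  ring

lemma main_pos (ξ₁ ξ₂ η₁ η₂ : ℝ) (hp : 0 < ξ₂) :
    (ξ₁ ≠ 0 → |ξ₁| ≤ 1 / 200 * |ξ₂| →
      |ksym ξ₁ ξ₂| ≤ 1000000 * (|ξ₂| / jb ξ₂) * |Omega1 ξ₁ η₁ ξ₂ η₂|) ∧
    (ξ₁ ≠ 0 → ξ₂ ≠ 0 → ξ₁ + ξ₂ ≠ 0 → |ξ₁ + ξ₂| ≤ 1 / 200 * |ξ₂| →
      |ksym ξ₁ ξ₂| ≤ 1000000 * (|ξ₁ + ξ₂| / jb ξ₂) * |Omega1 ξ₁ η₁ ξ₂ η₂|) := by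
  have habs2 : |ξ₂| = ξ₂ := abs_of_pos hp
  constructor
  · -- regime (i)
    intro h1 h2
    rw [habs2] at h2
    rw [abs_ksym]
    rcases h1.lt_or_gt with hneg | hpos
    · -- case B : ξ₁ < 0
      have hδ : 0 < -ξ₁ := by linarith
      have habs1 : |ξ₁| = -ξ₁ := abs_of_neg hneg
      rw [habs1] at h2
      have hβ : 0 < ξ₁ + ξ₂ := by linarith
      have hr : -ξ₁ ≤ (ξ₁ + ξ₂) / 100 := by linarith
      have e : (ξ₁ + ξ₂) + -ξ₁ = ξ₂ := by ring
      have hK : |hE (ξ₁ + ξ₂) - hE ξ₁ - hE ξ₂|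
          = |hE ((ξ₁ + ξ₂) + -ξ₁) - hE (ξ₁ + ξ₂) - hE (-ξ₁)| := by
        rw [show hE ((ξ₁ + ξ₂) + -ξ₁) - hE (ξ₁ + ξ₂) - hE (-ξ₁)
          = -(hE (ξ₁ + ξ₂) - hE ξ₁ - hE ξ₂) by rw [e, hE_neg]; ring, abs_neg]
      have hLam : fE ξ₁ + fE ξ₂ - fE (ξ₁ + ξ₂)
          = fE ((ξ₁ + ξ₂) + -ξ₁) - fE (ξ₁ + ξ₂) - fE (-ξ₁) := by
        rw [e, fE_neg]; ring
      have hm : ξ₁ * ξ₂ * (ξ₁ + ξ₂) < 0 := by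
        apply mul_neg_of_neg_of_pos _ hβ
        exact mul_neg_of_neg_of_pos hneg hp
      have hDq : (ξ₂ * η₁ - ξ₁ * η₂) ^ 2 / (ξ₁ * ξ₂ * (ξ₁ + ξ₂)) ≤ 0 :=
        div_nonpos_of_nonneg_of_nonpos (sq_nonneg _) hm.le
      have hP0 : 0 ≤ fE ((ξ₁ + ξ₂) + -ξ₁) - fE (ξ₁ + ξ₂) - fE (-ξ₁) := by
        linarith [superaddE hβ hδ]
      have hOm : fE ((ξ₁ + ξ₂) + -ξ₁) - fE (ξ₁ + ξ₂) - fE (-ξ₁)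
          ≤ |Omega1 ξ₁ η₁ ξ₂ η₂| := by
        apply le_abs.2 (Or.inl _)
        rw [Omega1_eq ξ₁ η₁ ξ₂ η₂ h1 hp.ne' hβ.ne', hLam]
        linarith [hDq]
      have hjb : jb ξ₂ ≤ 2 * Real.sqrt (1 + (ξ₁ + ξ₂) ^ 2) := by
        apply jb_le; nlinarith [hβ, hδ, hr]
      have hs2 : |ξ₁ + ξ₂| ≤ 2 * |ξ₂| := by
        rw [abs_of_pos hβ, habs2]; linarith
      exact fin_i hδ hr hK hOm hjb hs2
    · -- case A : ξ₁ > 0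
      have habs1 : |ξ₁| = ξ₁ := abs_of_pos hpos
      rw [habs1] at h2
      have hβ : 0 < ξ₂ := hp
      have hr : ξ₁ ≤ ξ₂ / 100 := by linarith
      have hs : 0 < ξ₁ + ξ₂ := by linarith
      have hK : |hE (ξ₁ + ξ₂) - hE ξ₁ - hE ξ₂|
          = |hE (ξ₂ + ξ₁) - hE ξ₂ - hE ξ₁| := by
        rw [add_comm ξ₁ ξ₂]; congr 1; ring
      have hLam : fE ξ₁ + fE ξ₂ - fE (ξ₁ + ξ₂)
          = -(fE (ξ₂ + ξ₁) - fE ξ₂ - fE ξ₁) := by rw [add_comm ξ₁ ξ₂]; ring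
      have hm : 0 < ξ₁ * ξ₂ * (ξ₁ + ξ₂) := by positivity
      have hDq : 0 ≤ (ξ₂ * η₁ - ξ₁ * η₂) ^ 2 / (ξ₁ * ξ₂ * (ξ₁ + ξ₂)) :=
        div_nonneg (sq_nonneg _) hm.le
      have hOm : fE (ξ₂ + ξ₁) - fE ξ₂ - fE ξ₁ ≤ |Omega1 ξ₁ η₁ ξ₂ η₂| := by
        apply le_abs.2 (Or.inr _)
        rw [Omega1_eq ξ₁ η₁ ξ₂ η₂ h1 hp.ne' hs.ne', hLam]
        linarith [hDq]
      have hjb : jb ξ₂ ≤ 2 * Real.sqrt (1 + ξ₂ ^ 2) := by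
        apply jb_le; nlinarith [sq_nonneg ξ₂]
      have hs2 : |ξ₁ + ξ₂| ≤ 2 * |ξ₂| := by
        rw [abs_of_pos hs, habs2]; linarith
      exact fin_i hpos hr hK hOm hjb hs2
  · -- regime (ii)
    intro h1 h2 h3 h4
    rw [habs2] at h4
    rw [abs_ksym]
    rcases h3.lt_or_gt with hneg | hpos
    · -- case D : ξ₁ + ξ₂ < 0
      have hδ : 0 < -(ξ₁ + ξ₂) := by linarith
      have habs : |ξ₁ + ξ₂| = -(ξ₁ + ξ₂) := abs_of_neg hneg
      rw [habs] at h4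
      have hr : -(ξ₁ + ξ₂) ≤ ξ₂ / 100 := by linarith
      have e : ξ₂ + -(ξ₁ + ξ₂) = -ξ₁ := by ring
      have hξ1 : ξ₁ < 0 := by linarith
      have hK : |hE (ξ₁ + ξ₂) - hE ξ₁ - hE ξ₂|
          = |hE (ξ₂ + -(ξ₁ + ξ₂)) - hE ξ₂ - hE (-(ξ₁ + ξ₂))| := by
        rw [show hE (ξ₂ + -(ξ₁ + ξ₂)) - hE ξ₂ - hE (-(ξ₁ + ξ₂))
          = hE (ξ₁ + ξ₂) - hE ξ₁ - hE ξ₂ by rw [e, hE_neg, hE_neg]; ring]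
      have hLam : fE ξ₁ + fE ξ₂ - fE (ξ₁ + ξ₂)
          = -(fE (ξ₂ + -(ξ₁ + ξ₂)) - fE ξ₂ - fE (-(ξ₁ + ξ₂))) := by
        rw [e, fE_neg, fE_neg]; ring
      have hm : 0 < ξ₁ * ξ₂ * (ξ₁ + ξ₂) := by
        have : ξ₁ * ξ₂ < 0 := mul_neg_of_neg_of_pos hξ1 hp
        exact mul_pos_of_neg_of_neg this hneg
      have hDq : 0 ≤ (ξ₂ * η₁ - ξ₁ * η₂) ^ 2 / (ξ₁ * ξ₂ * (ξ₁ + ξ₂)) :=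
        div_nonneg (sq_nonneg _) hm.le
      have hOm : fE (ξ₂ + -(ξ₁ + ξ₂)) - fE ξ₂ - fE (-(ξ₁ + ξ₂))
          ≤ |Omega1 ξ₁ η₁ ξ₂ η₂| := by
        apply le_abs.2 (Or.inr _)
        rw [Omega1_eq ξ₁ η₁ ξ₂ η₂ h1 hp.ne' h3, hLam]
        linarith [hDq]
      have hjb : jb ξ₂ ≤ 2 * Real.sqrt (1 + ξ₂ ^ 2) := by
        apply jb_le; nlinarith [sq_nonneg ξ₂]
      exact fin_ii hδ hr hK hOm hjb
    · -- case C : ξ₁ + ξ₂ > 0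
      have habs : |ξ₁ + ξ₂| = ξ₁ + ξ₂ := abs_of_pos hpos
      rw [habs] at h4
      have hξ1 : ξ₁ < 0 := by linarith
      have hβ : 0 < -ξ₁ := by linarith
      have hr : ξ₁ + ξ₂ ≤ -ξ₁ / 100 := by linarith
      have e : -ξ₁ + (ξ₁ + ξ₂) = ξ₂ := by ring
      have hK : |hE (ξ₁ + ξ₂) - hE ξ₁ - hE ξ₂|
          = |hE (-ξ₁ + (ξ₁ + ξ₂)) - hE (-ξ₁) - hE (ξ₁ + ξ₂)| := by
        rw [show hE (-ξ₁ + (ξ₁ + ξ₂)) - hE (-ξ₁) - hE (ξ₁ + ξ₂)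
          = -(hE (ξ₁ + ξ₂) - hE ξ₁ - hE ξ₂) by rw [e, hE_neg]; ring, abs_neg]
      have hLam : fE ξ₁ + fE ξ₂ - fE (ξ₁ + ξ₂)
          = fE (-ξ₁ + (ξ₁ + ξ₂)) - fE (-ξ₁) - fE (ξ₁ + ξ₂) := by
        rw [e, fE_neg]; ring
      have hm : ξ₁ * ξ₂ * (ξ₁ + ξ₂) < 0 := by
        have : ξ₁ * ξ₂ < 0 := mul_neg_of_neg_of_pos hξ1 hp
        exact mul_neg_of_neg_of_pos this hpos
      have hDq : (ξ₂ * η₁ - ξ₁ * η₂) ^ 2 / (ξ₁ * ξ₂ * (ξ₁ + ξ₂)) ≤ 0 :=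
        div_nonpos_of_nonneg_of_nonpos (sq_nonneg _) hm.le
      have hP0 : 0 ≤ fE (-ξ₁ + (ξ₁ + ξ₂)) - fE (-ξ₁) - fE (ξ₁ + ξ₂) := by
        linarith [superaddE hβ hpos]
      have hOm : fE (-ξ₁ + (ξ₁ + ξ₂)) - fE (-ξ₁) - fE (ξ₁ + ξ₂)
          ≤ |Omega1 ξ₁ η₁ ξ₂ η₂| := by
        apply le_abs.2 (Or.inl _)
        rw [Omega1_eq ξ₁ η₁ ξ₂ η₂ h1 hp.ne' h3, hLam]
        linarith [hDq]
      have hjb : jb ξ₂ ≤ 2 * Real.sqrt (1 + (-ξ₁) ^ 2) := by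
        apply jb_le; nlinarith [hβ, hr, hpos]
      exact fin_ii hpos hr hK hOm hjb

lemma ksym_even (a b : ℝ) : ksym (-a) (-b) = ksym a b := by
  unfold ksym csch
  rw [show -a + -b = -(a + b) by ring, Real.sinh_neg, Real.sinh_neg a, Real.sinh_neg b]
  ring

lemma Omega1_odd (ξ₁ η₁ ξ₂ η₂ : ℝ) :
    Omega1 (-ξ₁) (-η₁) (-ξ₂) (-η₂) = -Omega1 ξ₁ η₁ ξ₂ η₂ := by
  unfold Omega1
  rw [show -(-ξ₁ + -ξ₂) = ξ₁ + ξ₂ by ring, show -(-η₁ + -η₂) = η₁ + η₂ by ring,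
    omega1_neg ξ₁ η₁, omega1_neg ξ₂ η₂,
    show omega1 (ξ₁ + ξ₂) (η₁ + η₂) = - -omega1 (ξ₁ + ξ₂) (η₁ + η₂) by ring,
    ← omega1_neg (ξ₁ + ξ₂) (η₁ + η₂)]
  ring

lemma jb_even (x : ℝ) : jb (-x) = jb x := by
  unfold jb; congr 1; ring

theorem normal_form_symbol_bound :
    ∃ C : ℝ, 0 < C ∧ ∃ ε : ℝ, 0 < ε ∧ ε < 1 ∧
      ∀ ξ₁ ξ₂ η₁ η₂ : ℝ,
        (ξ₁ ≠ 0 → |ξ₁| ≤ ε * |ξ₂| →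
          |ksym ξ₁ ξ₂| ≤ C * (|ξ₂| / jb ξ₂) * |Omega1 ξ₁ η₁ ξ₂ η₂|) ∧
        (ξ₁ ≠ 0 → ξ₂ ≠ 0 → ξ₁ + ξ₂ ≠ 0 → |ξ₁ + ξ₂| ≤ ε * |ξ₂| →
          |ksym ξ₁ ξ₂| ≤ C * (|ξ₁ + ξ₂| / jb ξ₂) * |Omega1 ξ₁ η₁ ξ₂ η₂|) := by
  refine ⟨1000000, by norm_num, 1 / 200, by norm_num, by norm_num,
    fun ξ₁ ξ₂ η₁ η₂ => ?_⟩
  rcases lt_trichotomy 0 ξ₂ with h | h | h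
  · exact main_pos ξ₁ ξ₂ η₁ η₂ h
  · constructor
    · intro h1 h2
      exfalso
      rw [← h, abs_zero] at h2
      have := abs_pos.2 h1
      linarith
    · intro _ h2 _ _
      exact absurd h.symm h2
  · obtain ⟨Hi, Hii⟩ := main_pos (-ξ₁) (-ξ₂) (-η₁) (-η₂) (by linarith)
    have eadd : -ξ₁ + -ξ₂ = -(ξ₁ + ξ₂) := by ring
    constructor
    · intro h1 h2
      have := Hi (neg_ne_zero.2 h1) (by rw [abs_neg, abs_neg]; exact h2)
      rwa [ksym_even, jb_even, abs_neg, Omega1_odd, abs_neg] at this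
    · intro h1 h2 h3 h4
      have := Hii (neg_ne_zero.2 h1) (neg_ne_zero.2 h2)
        (by rw [eadd]; exact neg_ne_zero.2 h3)
        (by rw [eadd, abs_neg, abs_neg]; exact h4)
      rwa [ksym_even, jb_even, eadd, abs_neg, Omega1_odd, abs_neg] at this
end
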